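/- arXiv:math/0509360 — 2 statements merged into one kernel-verified Lean document; each statement's English description precedes it below -/
import Mathlib

section
/- Let (S_j)_{j=0}^{N-1} be a representation of the Cuntz algebra 𝒪_N on H, let f ∈ H with ‖f‖ = 1, let μ_f be a spectral measure of f on [0,1), and for each j = 0,…,N−1 let ν_j be a spectral measure of S_j^* f on [0,1). Then for every t ∈ ℝ, ∫_{[0,1)} e^{itx} dμ_f(x) = ∑_{j=0}^{N−1} e^{ijt/N} ∫_{[0,1)} e^{itx/N} dν_j(x). -/
/-!
Both sides are limits, as `k → ∞`, of Riemann sums over the `N`-adic intervals `I_k(α)`, with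
error at most `|t| N^{-k}` times the total mass. Since `S_{jα}^* f = S_α^* (S_j^* f)`, the
interval `I_{k+1}(jα) = σ_j(I_k(α))` has `μ_f`-mass `ν_j(I_k(α))` and left endpoint
`σ_j(x_k(α))`. Hence the level-`(k+1)` Riemann sum of `e^{itx}` against `μ_f` is the sum over `j`
of the level-`k` Riemann sums of `e^{itσ_j(x)} = e^{ijt/N} e^{itx/N}` against `ν_j`.
-/

open MeasureTheory ContinuousLinearMap
open scoped InnerProductSpace

variable {H : Type*} [NormedAddCommGroup H] [InnerProductSpace ℂ H] [CompleteSpace H]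

/-- The word operator `S_α = S_{α 1} ⋯ S_{α k}` associated to a multi-index
`α ∈ {0,…,N-1}^k`. -/
noncomputable def Sw {N : ℕ} (S : Fin N → H →L[ℂ] H) {k : ℕ} (α : Fin k → Fin N) :
    H →L[ℂ] H :=
  (List.ofFn fun i => S (α i)).prod

/-- A family `S_0, …, S_{N-1}` of bounded operators is a representation of the Cuntz
algebra `𝒪_N` if `S_j^* S_k = δ_{jk} I` and `∑ j, S_j S_j^* = I`. -/
def CuntzRep {N : ℕ} (S : Fin N → H →L[ℂ] H) : Prop :=
  (∀ j k : Fin N, adjoint (S j) ∘L S k = if j = k then 1 else 0) ∧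
    ∑ j : Fin N, S j ∘L adjoint (S j) = 1

/-- `x_k(α) = α_1/N + α_2/N² + ⋯ + α_k/N^k`. -/
noncomputable def xk (N : ℕ) {k : ℕ} (α : Fin k → Fin N) : ℝ :=
  ∑ i : Fin k, (α i : ℝ) / (N : ℝ) ^ ((i : ℕ) + 1)

/-- The `N`-adic interval `I_k(α) = [x_k(α), x_k(α) + N^{-k})`. -/
noncomputable def Ik (N : ℕ) {k : ℕ} (α : Fin k → Fin N) : Set ℝ :=
  Set.Ico (xk N α) (xk N α + ((N : ℝ) ^ k)⁻¹)

/-- A Borel measure `μ` on `[0,1)` is a spectral measure of `g` if `μ([0,1)) = ‖g‖²`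
and `μ(I_k(α)) = ‖S_α^* g‖²` for every `k ≥ 1` and multi-index `α`. -/
def IsSpectralMeasureR {N : ℕ} (S : Fin N → H →L[ℂ] H) (g : H) (μ : Measure ℝ) : Prop :=
  μ (Set.Ico (0:ℝ) 1)ᶜ = 0 ∧ μ Set.univ = ENNReal.ofReal (‖g‖ ^ 2) ∧
    ∀ k : ℕ, 1 ≤ k → ∀ α : Fin k → Fin N,
      μ (Ik N α) = ENNReal.ofReal (‖adjoint (Sw S α) g‖ ^ 2)

open Filter Topology Function
open scoped NNReal

section NAdicIntervals

variable {N k : ℕ}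

/-- Reads `α` as the base-`N` digits of a number below `N ^ k`, most significant digit first. -/
def nadicDigitsEquiv : (Fin k → Fin N) ≃ Fin (N ^ k) :=
  (Equiv.arrowCongr Fin.revPerm (Equiv.refl (Fin N))).trans finFunctionFinEquiv

lemma xk_eq_nadicDigitsEquiv_div (hN : 0 < N) (α : Fin k → Fin N) :
    xk N α = (nadicDigitsEquiv α : ℕ) / (N : ℝ) ^ k := by
  have hre : ∀ i : Fin k, ((α (Fin.rev i) : ℝ) * (N : ℝ) ^ (i : ℕ)) / (N : ℝ) ^ k
      = (α (Fin.rev i) : ℝ) / (N : ℝ) ^ ((Fin.rev i : ℕ) + 1) := by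
    intro i
    rw [div_eq_div_iff (by positivity) (by positivity), mul_assoc, ← pow_add, Fin.val_rev]
    congr 2
    omega
  change _ = ((∑ i : Fin k, (α (Fin.rev i) : ℕ) * N ^ (i : ℕ) : ℕ) : ℝ) / _
  push_cast
  rw [Finset.sum_div, Finset.sum_congr rfl fun i _ => hre i, xk]
  exact (Equiv.sum_comp Fin.revPerm fun i => (α i : ℝ) / (N : ℝ) ^ ((i : ℕ) + 1)).symm

lemma mem_Ik_iff (hN : 0 < N) (α : Fin k → Fin N) (x : ℝ) :
    x ∈ Ik N α ↔ 0 ≤ x ∧ ⌊x * (N : ℝ) ^ k⌋₊ = nadicDigitsEquiv α := by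
  have hc : (0 : ℝ) < (N : ℝ) ^ k := by positivity
  rw [Ik, xk_eq_nadicDigitsEquiv_div hN, ← one_div, ← add_div, Set.mem_Ico, div_le_iff₀ hc,
    lt_div_iff₀ hc]
  constructor
  · rintro ⟨hlo, hhi⟩
    have hx : 0 ≤ x * (N : ℝ) ^ k := le_trans (Nat.cast_nonneg _) hlo
    exact ⟨nonneg_of_mul_nonneg_left hx hc, (Nat.floor_eq_iff hx).2 ⟨hlo, hhi⟩⟩
  · rintro ⟨hx, hfloor⟩
    exact (Nat.floor_eq_iff (by positivity)).1 hfloor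

lemma pairwise_disjoint_Ik (hN : 0 < N) :
    Pairwise (Disjoint on fun α : Fin k → Fin N => Ik N α) := by
  intro α β hαβ
  refine Set.disjoint_left.2 fun x hα hβ => hαβ (nadicDigitsEquiv.injective (Fin.ext ?_))
  exact ((mem_Ik_iff hN α x).1 hα).2.symm.trans ((mem_Ik_iff hN β x).1 hβ).2

lemma iUnion_Ik (hN : 0 < N) : ⋃ α : Fin k → Fin N, Ik N α = Set.Ico 0 1 := by
  have hc : (0 : ℝ) < (N : ℝ) ^ k := by positivity
  ext x
  simp only [Set.mem_iUnion, mem_Ik_iff hN, Set.mem_Ico]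
  constructor
  · rintro ⟨α, hx, hfloor⟩
    have hlt : ⌊x * (N : ℝ) ^ k⌋₊ < N ^ k := hfloor ▸ (nadicDigitsEquiv α).isLt
    rw [Nat.floor_lt (by positivity)] at hlt
    push_cast at hlt
    exact ⟨hx, by nlinarith⟩
  · rintro ⟨hx0, hx1⟩
    have hlt : ⌊x * (N : ℝ) ^ k⌋₊ < N ^ k := by
      rw [Nat.floor_lt (by positivity)]
      push_cast
      nlinarith
    exact ⟨nadicDigitsEquiv.symm ⟨_, hlt⟩, hx0, by simp⟩

lemma Ik_subset_Ico (hN : 0 < N) (α : Fin k → Fin N) : Ik N α ⊆ Set.Ico 0 1 :=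
  iUnion_Ik hN ▸ Set.subset_iUnion (fun β => Ik N β) α

lemma measurableSet_Ik (α : Fin k → Fin N) : MeasurableSet (Ik N α) :=
  measurableSet_Ico

lemma dist_le_of_mem_Ik {α : Fin k → Fin N} {x : ℝ} (hx : x ∈ Ik N α) :
    dist x (xk N α) ≤ ((N : ℝ) ^ k)⁻¹ := by
  rw [Real.dist_eq, abs_of_nonneg (by linarith [hx.1])]
  linarith [hx.2]

lemma xk_cons (j : Fin N) (α : Fin k → Fin N) :
    xk N (Fin.cons j α) = (xk N α + j) / N := by
  rw [xk, Fin.sum_univ_succ, add_comm, add_div, xk, Finset.sum_div]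
  simp only [Fin.cons_zero, Fin.cons_succ, Fin.val_zero, Fin.val_succ, zero_add, pow_one,
    div_div, ← pow_succ]

end NAdicIntervals

section RiemannSum

variable {E : Type*} [NormedAddCommGroup E] [NormedSpace ℝ E] {N : ℕ}

noncomputable def riemannSum (N : ℕ) (m : Measure ℝ) (g : ℝ → E) (k : ℕ) : E :=
  ∑ α : Fin k → Fin N, m.real (Ik N α) • g (xk N α)

lemma norm_setIntegral_Ico_sub_riemannSum_le [CompleteSpace E] (hN : 0 < N) (m : Measure ℝ)
    [IsFiniteMeasure m] {K : ℝ≥0} {g : ℝ → E} (hg : LipschitzWith K g) (k : ℕ) :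
    ‖∫ x in Set.Ico 0 1, g x ∂m - riemannSum N m g k‖
      ≤ K * ((N : ℝ) ^ k)⁻¹ * m.real Set.univ := by
  have hint : ∀ α : Fin k → Fin N, IntegrableOn g (Ik N α) m := fun α =>
    (hg.continuous.continuousOn.integrableOn_compact isCompact_Icc).mono_set
      ((Ik_subset_Ico hN α).trans Set.Ico_subset_Icc_self)
  have hcell : ∀ α : Fin k → Fin N,
      ‖∫ x in Ik N α, g x ∂m - m.real (Ik N α) • g (xk N α)‖
        ≤ K * ((N : ℝ) ^ k)⁻¹ * m.real (Ik N α) := by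
    intro α
    rw [← setIntegral_const, ← integral_sub (hint α) (integrableOn_const (measure_ne_top m _))]
    refine norm_setIntegral_le_of_norm_le_const (measure_lt_top _ _) fun x hx => ?_
    rw [← dist_eq_norm]
    exact (hg.dist_le_mul x _).trans (by gcongr; exact dist_le_of_mem_Ik hx)
  calc ‖∫ x in Set.Ico 0 1, g x ∂m - riemannSum N m g k‖
      = ‖∑ α : Fin k → Fin N,
          (∫ x in Ik N α, g x ∂m - m.real (Ik N α) • g (xk N α))‖ := by
        rw [← iUnion_Ik hN, integral_iUnion_fintype measurableSet_Ik
          (pairwise_disjoint_Ik hN) hint, riemannSum, Finset.sum_sub_distrib]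
    _ ≤ ∑ α : Fin k → Fin N, K * ((N : ℝ) ^ k)⁻¹ * m.real (Ik N α) :=
        norm_sum_le_of_le _ fun α _ => hcell α
    _ = K * ((N : ℝ) ^ k)⁻¹ * m.real (Set.Ico 0 1) := by
        rw [← Finset.mul_sum, ← measureReal_iUnion_fintype (pairwise_disjoint_Ik hN)
          measurableSet_Ik (fun _ => measure_ne_top m _), iUnion_Ik hN]
    _ ≤ K * ((N : ℝ) ^ k)⁻¹ * m.real Set.univ := by
        gcongr
        · exact measure_ne_top m _
        · exact Set.subset_univ _

theorem tendsto_riemannSum [CompleteSpace E] (hN : 2 ≤ N) (m : Measure ℝ) [IsFiniteMeasure m]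
    {K : ℝ≥0} {g : ℝ → E} (hg : LipschitzWith K g) :
    Tendsto (riemannSum N m g) atTop (𝓝 (∫ x in Set.Ico 0 1, g x ∂m)) := by
  have hpow : Tendsto (fun k : ℕ => ((N : ℝ) ^ k)⁻¹) atTop (𝓝 0) :=
    tendsto_inv_atTop_zero.comp (tendsto_pow_atTop_atTop_of_one_lt (by exact_mod_cast hN))
  rw [tendsto_iff_norm_sub_tendsto_zero]
  refine squeeze_zero (fun _ => norm_nonneg _) (fun k => ?_)
    (by simpa using (hpow.const_mul (K : ℝ)).mul_const (m.real Set.univ))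
  rw [norm_sub_rev]
  exact norm_setIntegral_Ico_sub_riemannSum_le (by omega) m hg k

lemma riemannSum_succ {μ : Measure ℝ} {ν : Fin N → Measure ℝ} (g : ℝ → E) {k : ℕ}
    (hμν : ∀ (j : Fin N) (α : Fin k → Fin N), μ (Ik N (Fin.cons j α)) = ν j (Ik N α)) :
    riemannSum N μ g (k + 1)
      = ∑ j : Fin N, riemannSum N (ν j) (fun x => g ((x + j) / N)) k := by
  rw [riemannSum, ← (Fin.consEquiv fun _ => Fin N).sum_comp, Fintype.sum_prod_type]
  refine Finset.sum_congr rfl fun j _ => Finset.sum_congr rfl fun α _ => ?_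
  simp only [Fin.consEquiv, Equiv.coe_fn_mk, measureReal_def, hμν, xk_cons]

end RiemannSum

lemma lipschitzWith_add_const_div (a : ℝ) {c : ℝ} (hc : 1 ≤ c) :
    LipschitzWith 1 fun x : ℝ => (x + a) / c := by
  refine LipschitzWith.of_dist_le_mul fun x y => ?_
  rw [Real.dist_eq, Real.dist_eq, ← sub_div, add_sub_add_right_eq_sub, abs_div,
    abs_of_pos (by linarith : (0 : ℝ) < c), NNReal.coe_one, one_mul]
  exact div_le_self (abs_nonneg _) hc

lemma lipschitzWith_exp_I_mul (t : ℝ) :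
    LipschitzWith ‖t‖₊ fun x : ℝ => Complex.exp (Complex.I * t * x) := by
  refine LipschitzWith.of_dist_le_mul fun x y => ?_
  have hsplit : Complex.exp (Complex.I * t * x) - Complex.exp (Complex.I * t * y)
      = Complex.exp (Complex.I * t * y) * (Complex.exp (Complex.I * ↑(t * (x - y))) - 1) := by
    rw [mul_sub, mul_one, ← Complex.exp_add]
    push_cast
    ring_nf
  rw [dist_eq_norm, hsplit, norm_mul,
    show Complex.I * t * y = ↑(t * y) * Complex.I by push_cast; ring,
    Complex.norm_exp_ofReal_mul_I, one_mul, coe_nnnorm, Real.dist_eq, ← Real.norm_eq_abs,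
    ← norm_mul]
  exact Real.norm_exp_I_mul_ofReal_sub_one_le

lemma Sw_cons {E : Type*} [NormedAddCommGroup E] [InnerProductSpace ℂ E] {N : ℕ}
    (S : Fin N → E →L[ℂ] E) {k : ℕ} (j : Fin N) (α : Fin k → Fin N) :
    Sw S (Fin.cons j α) = S j ∘L Sw S α := by
  rw [Sw, List.ofFn_succ]
  rfl

namespace IsSpectralMeasureR

variable {N : ℕ} {S : Fin N → H →L[ℂ] H} {g : H} {μ : Measure ℝ}

lemma isFiniteMeasure (hμ : IsSpectralMeasureR S g μ) : IsFiniteMeasure μ :=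
  ⟨hμ.2.1 ▸ ENNReal.ofReal_lt_top⟩

lemma measure_Ik_cons (hμ : IsSpectralMeasureR S g μ) {j : Fin N} {ν : Measure ℝ}
    (hν : IsSpectralMeasureR S (adjoint (S j) g) ν) {k : ℕ} (hk : 1 ≤ k)
    (α : Fin k → Fin N) :
    μ (Ik N (Fin.cons j α)) = ν (Ik N α) := by
  rw [hμ.2.2 (k + 1) (by omega), hν.2.2 k hk, Sw_cons, adjoint_comp,
    ContinuousLinearMap.comp_apply]

end IsSpectralMeasureR

theorem stmt_5_general {N : ℕ} (hN : 2 ≤ N) (S : Fin N → H →L[ℂ] H)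
    (f : H)
    (μ : Measure ℝ) (hμ : IsSpectralMeasureR S f μ)
    (ν : Fin N → Measure ℝ)
    (hν : ∀ j : Fin N, IsSpectralMeasureR S (adjoint (S j) f) (ν j)) :
    ∀ t : ℝ,
      ∫ x in Set.Ico (0:ℝ) 1, Complex.exp (Complex.I * t * x) ∂μ =
        ∑ j : Fin N, Complex.exp (Complex.I * (j : ℝ) * t / (N : ℝ)) *
          ∫ x in Set.Ico (0:ℝ) 1, Complex.exp (Complex.I * t * x / (N : ℝ)) ∂(ν j) := by
  intro t
  have := hμ.isFiniteMeasure
  have := fun j => (hν j).isFiniteMeasure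
  have hg := lipschitzWith_exp_I_mul t
  have hgσ (j : Fin N) := hg.comp (lipschitzWith_add_const_div j (c := N) (by norm_cast; omega))
  rw [tendsto_nhds_unique_of_eventuallyEq
    ((tendsto_riemannSum hN μ hg).comp (tendsto_add_atTop_nat 1))
    (tendsto_finsetSum Finset.univ fun j _ => tendsto_riemannSum hN (ν j) (hgσ j))
    (eventually_atTop.2 ⟨1, fun k hk =>
      riemannSum_succ _ fun j α => hμ.measure_Ik_cons (hν j) hk α⟩)]
  refine Finset.sum_congr rfl fun j _ => ?_
  rw [← integral_const_mul]
  congr 1 with x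
  rw [Function.comp_apply, ← Complex.exp_add]
  congr 1
  push_cast
  ring

/-- Fourier transform scaling identity: if `μ` is a spectral measure of the unit vector
`f` and `ν_j` a spectral measure of `S_j^* f`, then
`μ̂(t) = ∑_j e^{ijt/N} ν̂_j(t/N)`. -/
theorem stmt_5 {N : ℕ} (hN : 2 ≤ N) (S : Fin N → H →L[ℂ] H) (hS : CuntzRep S)
    (f : H) (hf : ‖f‖ = 1)
    (μ : Measure ℝ) (hμ : IsSpectralMeasureR S f μ)
    (ν : Fin N → Measure ℝ)
    (hν : ∀ j : Fin N, IsSpectralMeasureR S (adjoint (S j) f) (ν j)) :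
    ∀ t : ℝ,
      ∫ x in Set.Ico (0:ℝ) 1, Complex.exp (Complex.I * t * x) ∂μ =
        ∑ j : Fin N, Complex.exp (Complex.I * (j : ℝ) * t / (N : ℝ)) *
          ∫ x in Set.Ico (0:ℝ) 1, Complex.exp (Complex.I * t * x / (N : ℝ)) ∂(ν j) :=
  stmt_5_general hN S f μ hμ ν hν
end

section
/- Let (S_j)_{j=0}^{N-1} be a representation of the Cuntz algebra 𝒪_N on H, let f ∈ H with ‖f‖ = 1, and let μ_f be a spectral measure of f on [0,1). Then the distribution functions converge pointwise: for every x ∈ [0,1), lim_{k→∞} μ_f^{(k)}([0,x]) = μ_f([0,x]). -/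
/-! For `k ≥ 1` the atoms of `μ_f^{(k)}` lying in `[0,x]` are the left endpoints of the
`N`-adic intervals `I_k(α)` that meet `[0,x]`, and these intervals tile `[0, g_k)` with
`g_k = (⌊N^k x⌋ + 1) / N^k`. Since `μ(I_k(α)) = ‖S_α^* f‖²`, this gives
`μ_f^{(k)}([0,x]) = μ([0, g_k))`, and as `g_k → x` from the right, continuity from above of the
finite measure `μ` yields the limit `μ([0,x])`. -/

open MeasureTheory ContinuousLinearMap
open scoped InnerProductSpace
open Set Filter Topology

variable {H : Type*} [NormedAddCommGroup H] [InnerProductSpace ℂ H] [CompleteSpace H]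

/-- The atomic measure `μ_f^{(k)} = ∑_α ‖S_α^* f‖² δ_{x_k(α)}`. -/
noncomputable def muk {N : ℕ} (S : Fin N → H →L[ℂ] H) (f : H) (k : ℕ) : Measure ℝ :=
  ∑ α : Fin k → Fin N,
    ENNReal.ofReal (‖adjoint (Sw S α) f‖ ^ 2) • Measure.dirac (xk N α)

lemma tendsto_measure_Ico_nhdsGT (μ : Measure ℝ) [IsFiniteMeasureOnCompacts μ] (a x : ℝ) :
    Tendsto (fun r => μ (Ico a r)) (𝓝[>] x) (𝓝 (μ (Icc a x))) := by
  have hinter : ⋂ r > x, Ico a r = Icc a x := by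
    ext y
    simp only [mem_iInter, mem_Ico, mem_Icc]
    exact ⟨fun h => ⟨(h (x + 1) (by linarith)).1, le_of_forall_gt fun r hr => (h r hr).2⟩,
      fun h r hr => ⟨h.1, h.2.trans_lt hr⟩⟩
  rw [← hinter]
  refine tendsto_measure_biInter_gt (fun _ _ => nullMeasurableSet_Ico)
    (fun _ _ _ hij => Ico_subset_Ico_right hij) ⟨x + 1, by linarith, ?_⟩
  exact ((measure_mono Ico_subset_Icc_self).trans_lt isCompact_Icc.measure_lt_top).ne

lemma measure_Ico_zero_natCast_div (μ : Measure ℝ) {q : ℝ} (hq : 0 < q) (m : ℕ) :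
    μ (Ico 0 (m / q)) = ∑ n ∈ Finset.range m, μ (Ico (n / q) ((n + 1) / q)) := by
  induction m with
  | zero => simp
  | succ m ih =>
    rw [Finset.sum_range_succ, ← ih, ← measure_union Ico_disjoint_Ico_same measurableSet_Ico,
      Ico_union_Ico_eq_Ico (by positivity) (by gcongr; linarith)]
    push_cast
    rfl

section NAdic

variable {N : ℕ}

/-- Reads `α` as the base-`N` digits of an integer, most significant first, so that
`x_k(α) = nadicEquiv α / N^k`. -/
def nadicEquiv {k : ℕ} : (Fin k → Fin N) ≃ Fin (N ^ k) :=
  (Equiv.arrowCongr Fin.revPerm (Equiv.refl _)).trans finFunctionFinEquiv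

lemma xk_nonneg {k : ℕ} (α : Fin k → Fin N) : 0 ≤ xk N α :=
  Finset.sum_nonneg fun _ _ => by positivity

lemma xk_eq_nadicEquiv_div (hN : N ≠ 0) {k : ℕ} (α : Fin k → Fin N) :
    xk N α = (nadicEquiv α : ℕ) / (N : ℝ) ^ k := by
  simp only [nadicEquiv, Equiv.trans_apply, Equiv.arrowCongr_apply, Fin.revPerm_symm,
    Equiv.coe_refl, finFunctionFinEquiv_apply, xk]
  push_cast
  rw [Finset.sum_div]
  refine Fintype.sum_equiv Fin.revPerm _ _ fun j => ?_
  have hsplit : (N : ℝ) ^ k = (N : ℝ) ^ (Fin.rev j : ℕ) * (N : ℝ) ^ ((j : ℕ) + 1) := by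
    rw [← pow_add, Fin.val_rev]
    congr 1
    omega
  simp only [Function.comp_apply, Fin.revPerm_apply, Fin.rev_rev, id, hsplit]
  field_simp

lemma Ik_eq_Ico_nadicEquiv (hN : N ≠ 0) {k : ℕ} (α : Fin k → Fin N) :
    Ik N α = Ico ((nadicEquiv α : ℕ) / (N : ℝ) ^ k) (((nadicEquiv α : ℕ) + 1) / (N : ℝ) ^ k) := by
  rw [Ik, xk_eq_nadicEquiv_div hN, add_div, one_div]

/-- The right endpoint of the `N`-adic interval of length `N^{-k}` containing `x`. -/
noncomputable def nadicRightEnd (N : ℕ) (x : ℝ) (k : ℕ) : ℝ :=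
  (⌊(N : ℝ) ^ k * x⌋₊ + 1) / (N : ℝ) ^ k

lemma lt_nadicRightEnd (hN : N ≠ 0) (x : ℝ) (k : ℕ) : x < nadicRightEnd N x k := by
  rw [nadicRightEnd, lt_div_iff₀ (by positivity), mul_comm]
  exact Nat.lt_floor_add_one _

lemma nadicRightEnd_le (hN : N ≠ 0) {x : ℝ} (hx : 0 ≤ x) (k : ℕ) :
    nadicRightEnd N x k ≤ x + ((N : ℝ) ^ k)⁻¹ := by
  have hq : (0 : ℝ) < (N : ℝ) ^ k := by positivity
  rw [nadicRightEnd, div_le_iff₀ hq, add_mul, inv_mul_cancel₀ hq.ne', mul_comm x]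
  gcongr
  exact Nat.floor_le (by positivity)

lemma tendsto_nadicRightEnd (hN : 1 < N) {x : ℝ} (hx : 0 ≤ x) :
    Tendsto (nadicRightEnd N x) atTop (𝓝[>] x) := by
  have hN0 : N ≠ 0 := by omega
  have hNR : (1 : ℝ) < N := by exact_mod_cast hN
  have hupper : Tendsto (fun k : ℕ => x + ((N : ℝ) ^ k)⁻¹) atTop (𝓝 x) := by
    simpa using tendsto_const_nhds.add
      (tendsto_inv_atTop_zero.comp (tendsto_pow_atTop_atTop_of_one_lt hNR))
  refine tendsto_nhdsWithin_of_tendsto_nhds_of_eventually_within _ ?_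
    (Eventually.of_forall fun k => lt_nadicRightEnd hN0 x k)
  exact tendsto_of_tendsto_of_tendsto_of_le_of_le tendsto_const_nhds hupper
    (fun k => (lt_nadicRightEnd hN0 x k).le) (nadicRightEnd_le hN0 hx)

lemma sum_measure_Ik_of_xk_le (μ : Measure ℝ) (hN : N ≠ 0) {x : ℝ} (hx0 : 0 ≤ x) (hx1 : x < 1)
    (k : ℕ) :
    ∑ α : Fin k → Fin N, (if xk N α ≤ x then μ (Ik N α) else 0)
      = μ (Ico 0 (nadicRightEnd N x k)) := by
  rw [nadicRightEnd]
  set q : ℝ := (N : ℝ) ^ k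
  have hq : 0 < q := by positivity
  have hfloor : ⌊q * x⌋₊ < N ^ k := by
    rw [Nat.floor_lt (by positivity)]
    push_cast
    nlinarith
  rw [Fintype.sum_equiv nadicEquiv _
      (fun n => if (n : ℕ) / q ≤ x then μ (Ico ((n : ℕ) / q) (((n : ℕ) + 1) / q)) else 0)
      (fun α => by rw [Ik_eq_Ico_nadicEquiv hN, xk_eq_nadicEquiv_div hN]),
    Fin.sum_univ_eq_sum_range
      (fun n => if (n : ℝ) / q ≤ x then μ (Ico ((n : ℝ) / q) ((n + 1) / q)) else 0),
    ← Finset.sum_filter, ← Nat.cast_succ, measure_Ico_zero_natCast_div μ hq]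
  congr 1
  ext n
  rw [Finset.mem_filter, Finset.mem_range, Finset.mem_range, div_le_iff₀ hq, mul_comm,
    ← Nat.le_floor_iff (by positivity)]
  omega

end NAdic

lemma muk_apply_Icc_zero {N : ℕ} {S : Fin N → H →L[ℂ] H} {f : H} {μ : Measure ℝ}
    (hμ : IsSpectralMeasureR S f μ) {k : ℕ} (hk : 1 ≤ k) (x : ℝ) :
    muk S f k (Icc 0 x) = ∑ α : Fin k → Fin N, if xk N α ≤ x then μ (Ik N α) else 0 := by
  rw [muk, Measure.finsetSum_apply]
  refine Finset.sum_congr rfl fun α _ => ?_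
  rw [Measure.smul_apply, Measure.dirac_apply' _ measurableSet_Icc, ← hμ.2.2 k hk α]
  by_cases hαx : xk N α ≤ x <;> simp [hαx, xk_nonneg α]

theorem stmt_9_general {N : ℕ} (hN : 2 ≤ N) (S : Fin N → H →L[ℂ] H) (f : H)
    (μ : Measure ℝ) (hμ : IsSpectralMeasureR S f μ) :
    ∀ x ∈ Set.Ico (0:ℝ) 1,
      Filter.Tendsto (fun k : ℕ => muk S f k (Set.Icc (0:ℝ) x))
        Filter.atTop (nhds (μ (Set.Icc (0:ℝ) x))) := by
  rintro x ⟨hx0, hx1⟩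
  have : IsFiniteMeasure μ := ⟨by rw [hμ.2.1]; exact ENNReal.ofReal_lt_top⟩
  refine ((tendsto_measure_Ico_nhdsGT μ 0 x).comp (tendsto_nadicRightEnd hN hx0)).congr' ?_
  filter_upwards [eventually_ge_atTop 1] with k hk
  rw [Function.comp_apply, muk_apply_Icc_zero hμ hk,
    sum_measure_Ik_of_xk_le μ (by omega) hx0 hx1]

/-- Pointwise convergence of the distribution functions:
`μ_f^{(k)}([0,x]) → μ_f([0,x])` for every `x ∈ [0,1)`. -/
theorem stmt_9 {N : ℕ} (hN : 2 ≤ N) (S : Fin N → H →L[ℂ] H) (hS : CuntzRep S)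
    (f : H) (hf : ‖f‖ = 1)
    (μ : Measure ℝ) (hμ : IsSpectralMeasureR S f μ) :
    ∀ x ∈ Set.Ico (0:ℝ) 1,
      Filter.Tendsto (fun k : ℕ => muk S f k (Set.Icc (0:ℝ) x))
        Filter.atTop (nhds (μ (Set.Icc (0:ℝ) x))) :=
  stmt_9_general hN S f μ hμ
end
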